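/- arXiv:2512.16309 — 7 statements merged into one kernel-verified Lean document; each statement's English description precedes it below -/
import Mathlib

section
/- For integers n1, n2 > 1 with n = n1*n2, the n×n lower triangular all-ones matrix L_n equals the Kronecker product L_{n1} ⊗ L_{n2} plus the Kronecker product L⁻_{n1} ⊗ U⁻_{n2}, where L⁻ and U⁻ denote the strictly lower and strictly upper triangular all-ones matrices. -/
open Kronecker

/-- Lower triangular all-ones matrix: entry 1 iff row ≥ column. -/
def Lone (R : Type*) [CommRing R] (m : ℕ) : Matrix (Fin m) (Fin m) R :=
  Matrix.of fun i j => if j ≤ i then 1 else 0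

/-- Upper triangular all-ones matrix: entry 1 iff row ≤ column. -/
def Uone (R : Type*) [CommRing R] (m : ℕ) : Matrix (Fin m) (Fin m) R :=
  Matrix.of fun i j => if i ≤ j then 1 else 0

/-- Strictly lower triangular all-ones matrix L⁻ = L - I. -/
def Lstrict (R : Type*) [CommRing R] (m : ℕ) : Matrix (Fin m) (Fin m) R :=
  Lone R m - 1

/-- Strictly upper triangular all-ones matrix U⁻ = U - I. -/
def Ustrict (R : Type*) [CommRing R] (m : ℕ) : Matrix (Fin m) (Fin m) R :=
  Uone R m - 1

lemma key (n2 i j : ℕ) :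
    j ≤ i ↔ j / n2 < i / n2 ∨ (j / n2 = i / n2 ∧ j % n2 ≤ i % n2) := by
  constructor
  · intro h
    rcases lt_or_eq_of_le (Nat.div_le_div_right (c := n2) h) with h' | h'
    · exact Or.inl h'
    · refine Or.inr ⟨h', ?_⟩
      have hi := Nat.div_add_mod i n2
      have hj := Nat.div_add_mod j n2
      have hq : n2 * (j / n2) = n2 * (i / n2) := by rw [h']
      omega
  · rintro (h | ⟨h, hm⟩)
    · by_contra hc
      exact absurd (Nat.div_le_div_right (c := n2) (le_of_not_ge hc)) (not_le.mpr h)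
    · have hi := Nat.div_add_mod i n2
      have hj := Nat.div_add_mod j n2
      have hq : n2 * (j / n2) = n2 * (i / n2) := by rw [h]
      omega

lemma entry (R : Type*) [CommRing R] (a1 a2 b1 b2 : ℕ) :
    (if a2 < a1 ∨ (a2 = a1 ∧ b2 ≤ b1) then (1 : R) else 0) =
      (if a2 ≤ a1 then (1 : R) else 0) * (if b2 ≤ b1 then 1 else 0) +
        ((if a2 ≤ a1 then (1 : R) else 0) - if a1 = a2 then 1 else 0) *
          ((if b1 ≤ b2 then (1 : R) else 0) - if b1 = b2 then 1 else 0) := by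
  split_ifs <;> first | ring1 | (exfalso; omega)

theorem L_kronecker_decomposition (R : Type*) [CommRing R]
    (n n1 n2 : ℕ) (h1 : 1 < n1) (h2 : 1 < n2) (hn : n = n1 * n2) :
    Lone R n =
      Matrix.reindex (finProdFinEquiv.trans (finCongr hn.symm))
        (finProdFinEquiv.trans (finCongr hn.symm))
        (Lone R n1 ⊗ₖ Lone R n2 + Lstrict R n1 ⊗ₖ Ustrict R n2) := by
  ext i j
  simp only [Matrix.reindex_apply, Matrix.submatrix_apply, Equiv.symm_trans_apply,
    finCongr_symm, finCongr_apply, finProdFinEquiv_symm_apply, Matrix.add_apply,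
    Matrix.kroneckerMap_apply, Lstrict, Ustrict, Lone, Uone, Matrix.sub_apply,
    Matrix.one_apply, Matrix.of_apply, Fin.divNat, Fin.modNat, Fin.coe_cast,
    Fin.le_def, Fin.ext_iff, Fin.mk_le_mk, Fin.mk.injEq]
  simp only [key n2 (i : ℕ) (j : ℕ)]
  exact entry R ((i : ℕ) / n2) ((j : ℕ) / n2) ((i : ℕ) % n2) ((j : ℕ) % n2)
end

section
/- For integers n1, n2 > 1 with n = n1*n2, the n×n lower triangular all-ones matrix L_n equals I_{n1} ⊗ L_{n2} + L⁻_{n1} ⊗ J_{n2}, where J_{n2} is the n2×n2 all-ones matrix. -/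
open Kronecker

/-- All-ones matrix J. -/
def Jmat (R : Type*) [CommRing R] (m : ℕ) : Matrix (Fin m) (Fin m) R :=
  Matrix.of fun _ _ => 1

lemma lex_nat (n2 b d : ℕ) (hb : b < n2) (hd : d < n2) (a c : ℕ) :
    n2 * c + d ≤ n2 * a + b ↔ c < a ∨ (c = a ∧ d ≤ b) := by
  constructor
  · intro h
    rcases lt_trichotomy c a with hc | hc | hc
    · exact Or.inl hc
    · subst hc; exact Or.inr ⟨rfl, by omega⟩
    · exfalso; nlinarith
  · rintro (hc | ⟨rfl, hd'⟩)
    · nlinarith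
    · omega

theorem L_kronecker_decomposition_identity_form (R : Type*) [CommRing R]
    (n n1 n2 : ℕ) (h1 : 1 < n1) (h2 : 1 < n2) (hn : n = n1 * n2) :
    Lone R n =
      Matrix.reindex (finProdFinEquiv.trans (finCongr hn.symm))
        (finProdFinEquiv.trans (finCongr hn.symm))
        ((1 : Matrix (Fin n1) (Fin n1) R) ⊗ₖ Lone R n2 + Lstrict R n1 ⊗ₖ Jmat R n2) := by
  ext i j
  simp only [Matrix.reindex_apply, Matrix.submatrix_apply, Equiv.symm_trans_apply,
    finCongr_symm, finCongr_apply, Matrix.add_apply, Matrix.kroneckerMap_apply,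
    finProdFinEquiv_symm_apply, Lone, Lstrict, Jmat, Matrix.of_apply,
    Matrix.one_apply, Matrix.sub_apply]
  set i1 := (Fin.cast hn i).divNat with hi1
  set i2 := (Fin.cast hn i).modNat with hi2
  set j1 := (Fin.cast hn j).divNat with hj1
  set j2 := (Fin.cast hn j).modNat with hj2
  have hiv : (i : ℕ) = n2 * (i1 : ℕ) + (i2 : ℕ) := (Nat.div_add_mod (i : ℕ) n2).symm
  have hjv : (j : ℕ) = n2 * (j1 : ℕ) + (j2 : ℕ) := (Nat.div_add_mod (j : ℕ) n2).symm
  have key : j ≤ i ↔ (j1 : ℕ) < (i1 : ℕ) ∨ (j1 = i1 ∧ j2 ≤ i2) := by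
    rw [Fin.le_def, hiv, hjv, lex_nat n2 i2.1 j2.1 i2.2 j2.2]
    simp only [Fin.ext_iff, Fin.le_def]
  by_cases hlt : (j1 : ℕ) < (i1 : ℕ)
  · have hne : ¬ i1 = j1 := by
      intro h; rw [Fin.ext_iff] at h; omega
    have : j ≤ i := key.mpr (Or.inl hlt)
    have hji : j1 ≤ i1 := by rw [Fin.le_def]; omega
    simp [this, hne, hji]
  · by_cases heq : i1 = j1
    · have heq' : j1 = i1 := heq.symm
      by_cases h22 : j2 ≤ i2
      · have : j ≤ i := key.mpr (Or.inr ⟨heq', h22⟩)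
        simp [this, h22, heq]
      · have : ¬ j ≤ i := by
          intro h
          rcases key.mp h with h' | ⟨_, h'⟩
          · rw [Fin.ext_iff] at heq; omega
          · exact h22 h'
        simp [this, h22, heq]
    · have hne' : j1 ≠ i1 := fun h => heq h.symm
      have : ¬ j ≤ i := by
        intro h
        rcases key.mp h with h' | ⟨h', _⟩
        · exact hlt h'
        · exact hne' h'
      have hvne : (j1 : ℕ) ≠ (i1 : ℕ) := fun h => hne' (Fin.ext h)
      have hle' : ¬ j1 ≤ i1 := by
        rw [Fin.le_def]
        omega
      simp [this, heq, hle']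
end

section
/- For integers n1, n2 > 1 with n = n1*n2, the n×n upper triangular all-ones matrix satisfies U_n = U_{n1} ⊗ J_{n2} − I_{n1} ⊗ L⁻_{n2}, where J_{n2} is the all-ones matrix. -/
open Kronecker

theorem U_kronecker_J_decomposition (R : Type*) [CommRing R]
    (n n1 n2 : ℕ) (h1 : 1 < n1) (h2 : 1 < n2) (hn : n = n1 * n2) :
    Uone R n =
      Matrix.reindex (finProdFinEquiv.trans (finCongr hn.symm))
        (finProdFinEquiv.trans (finCongr hn.symm))
        (Uone R n1 ⊗ₖ Jmat R n2 - (1 : Matrix (Fin n1) (Fin n1) R) ⊗ₖ Lstrict R n2) := by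
  ext a b
  obtain ⟨⟨v1, v2⟩, rfl⟩ := (finProdFinEquiv.trans (finCongr hn.symm)).surjective a
  obtain ⟨⟨w1, w2⟩, rfl⟩ := (finProdFinEquiv.trans (finCongr hn.symm)).surjective b
  simp only [Matrix.reindex_apply, Matrix.submatrix_apply, Equiv.symm_apply_apply]
  simp only [Matrix.sub_apply, Matrix.kroneckerMap_apply, Uone, Jmat, Lstrict, Lone,
    Matrix.of_apply, Matrix.one_apply, Matrix.sub_apply, Equiv.trans_apply,
    finCongr_apply, Fin.le_def, Fin.coe_cast, finProdFinEquiv_apply_val]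
  have hv2 := v2.isLt
  have hw2 := w2.isLt
  rcases lt_trichotomy (v1 : ℕ) (w1 : ℕ) with h | h | h
  · rw [if_pos, if_pos (le_of_lt h), if_neg (by omega)]
    · ring
    · have hmul : n2 * (v1 : ℕ) + n2 ≤ n2 * w1 := by
        rw [← Nat.mul_succ]; exact Nat.mul_le_mul_left _ (by omega)
      omega
  · have hv1w1 : v1 = w1 := Fin.ext h
    subst hv1w1
    rw [if_pos rfl, if_pos le_rfl]
    rcases le_or_gt (v2:ℕ) (w2:ℕ) with hle | hlt
    · rw [if_pos (by omega)]
      rcases eq_or_lt_of_le hle with heq | hlt2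
      · rw [if_pos (by omega), if_pos (Fin.ext heq)]; ring
      · rw [if_neg (by omega), if_neg (fun hh => by simp [hh] at hlt2)]; ring
    · rw [if_neg (by omega), if_pos (by omega), if_neg (fun hh => by simp [hh] at hlt)]
      ring
  · rw [if_neg, if_neg (by omega), if_neg (fun hh => by simp [hh] at h)]
    · ring
    · have hmul : n2 * (w1 : ℕ) + n2 ≤ n2 * v1 := by
        rw [← Nat.mul_succ]; exact Nat.mul_le_mul_left _ (by omega)
      omega
end

section
/- For integers n1, n2 > 1 with n = n1*n2, the upper triangular all-ones matrix decomposes as U_n = U_{n1} ⊗ U_{n2} + U⁻_{n1} ⊗ L⁻_{n2}. -/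
open Kronecker

theorem U_kronecker_decomposition (R : Type*) [CommRing R]
    (n n1 n2 : ℕ) (h1 : 1 < n1) (h2 : 1 < n2) (hn : n = n1 * n2) :
    Uone R n =
      Matrix.reindex (finProdFinEquiv.trans (finCongr hn.symm))
        (finProdFinEquiv.trans (finCongr hn.symm))
        (Uone R n1 ⊗ₖ Uone R n2 + Ustrict R n1 ⊗ₖ Lstrict R n2) := by
  subst hn
  have key : ∀ (p q r s : ℕ), r < n2 → s < n2 →
      (n2 * p + r ≤ n2 * q + s ↔ (p < q ∨ (p = q ∧ r ≤ s))) := by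
    intro p q r s hr hs
    constructor
    · intro h
      rcases lt_trichotomy p q with h' | h' | h'
      · exact Or.inl h'
      · subst h'; exact Or.inr ⟨rfl, by omega⟩
      · exfalso
        have h4 : n2 * (q + 1) ≤ n2 * p := Nat.mul_le_mul_left n2 h'
        rw [Nat.mul_succ] at h4
        omega
    · rintro (h' | ⟨rfl, h'⟩)
      · have h4 : n2 * (p + 1) ≤ n2 * q := Nat.mul_le_mul_left n2 h'
        rw [Nat.mul_succ] at h4
        omega
      · omega
  ext i j
  simp only [Matrix.reindex_apply, Matrix.submatrix_apply, Equiv.symm_trans_apply,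
    finCongr_symm, finCongr_apply, Matrix.add_apply, Matrix.kroneckerMap_apply,
    finProdFinEquiv_symm_apply, Uone, Ustrict, Lstrict, Lone, Matrix.of_apply,
    Matrix.sub_apply, Matrix.one_apply]
  have hi : (i : ℕ) = n2 * ((Fin.cast rfl i).divNat : ℕ) + ((Fin.cast rfl i).modNat : ℕ) := by
    simp [Fin.divNat, Fin.modNat, Nat.div_add_mod]
  have hj : (j : ℕ) = n2 * ((Fin.cast rfl j).divNat : ℕ) + ((Fin.cast rfl j).modNat : ℕ) := by
    simp [Fin.divNat, Fin.modNat, Nat.div_add_mod]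
  set a := (Fin.cast rfl i).divNat
  set b := (Fin.cast rfl i).modNat
  set c := (Fin.cast rfl j).divNat
  set d := (Fin.cast rfl j).modNat
  have hb : (b : ℕ) < n2 := b.isLt
  have hd : (d : ℕ) < n2 := d.isLt
  have hab : i ≤ j ↔ ((a : ℕ) < c ∨ ((a : ℕ) = c ∧ (b : ℕ) ≤ d)) := by
    rw [Fin.le_def, hi, hj, key _ _ _ _ hb hd]
  simp only [hab]
  simp only [Fin.le_def, Fin.ext_iff]
  split_ifs <;> first | ring1 | (exfalso; omega)
end

section
/- Define S : ℕ → ℕ and D : ℕ → ℕ for fixed s ≥ 2 by: for n ≤ 2s, S(n) = n − 1 and D(n) = n − 1; for n > 2s, letting m = ⌈n/s⌉ − 1, S(n) = (n − ⌈n/s⌉) + S(m) + (n − s − ⌈n/s⌉ + 2) and D(n) = s + D(m) (with the size of the three layers summing as stated). Then for all n ≥ 2, S(n) + D(n) = 2n − 2 (zero deficiency). -/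
theorem ceilDivAux_lt' (s n : ℕ) (h : 2 * s < n) : (n + s - 1) / s - 1 < n := by
  rcases Nat.eq_zero_or_pos s with hs | hs
  · simp [hs]; omega
  · have h2 : n ≤ n * s := Nat.le_mul_of_pos_right n hs
    have hd : (n + s - 1) / s < n + 1 := by
      rw [Nat.div_lt_iff_lt_mul hs]
      have : (n + 1) * s = n * s + s := by ring
      omega
    omega

/-- Depth recursion: `D(n) = n - 1` for `n ≤ 2s`, and `D(n) = s + D(⌈n/s⌉ - 1)` for `n > 2s`. -/
def D2 (s : ℕ) : ℕ → ℕ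
  | n =>
    if n ≤ 2 * s then n - 1
    else s + D2 s ((n + s - 1) / s - 1)
  termination_by n => n
  decreasing_by
    rename_i h
    exact ceilDivAux_lt' s _ (Nat.lt_of_not_le h)

/-- Size recursion: `S(n) = n - 1` for `n ≤ 2s`, and for `n > 2s`, with `m = ⌈n/s⌉ - 1`,
`S(n) = (n - ⌈n/s⌉) + S(m) + (n - s - ⌈n/s⌉ + 2)` (layer 1, recursive layer 2, layer 3). -/
def S2 (s : ℕ) : ℕ → ℕ
  | n =>
    if n ≤ 2 * s then n - 1
    else
      (n - (n + s - 1) / s) + S2 s ((n + s - 1) / s - 1) + (n - s - (n + s - 1) / s + 2)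
  termination_by n => n
  decreasing_by
    rename_i h
    exact ceilDivAux_lt' s _ (Nat.lt_of_not_le h)

/-- Zero deficiency: `S(n) + D(n) = 2n - 2` for all `n ≥ 2`. -/
theorem zero_deficiency (s : ℕ) (hs : 2 ≤ s) :
    ∀ n, 2 ≤ n → S2 s n + D2 s n = 2 * n - 2 := by

  intro n
  induction n using Nat.strong_induction_on with
  | _ n ih =>
    intro hn
    by_cases hc : n ≤ 2 * s
    · rw [S2, D2]
      simp only [if_pos hc]
      omega
    · push_neg at hc
      set q := (n + s - 1) / s with hq
      have hs0 : 0 < s := by omega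
      have hdm := Nat.div_add_mod (n + s - 1) s
      rw [← hq] at hdm
      have hmlt := Nat.mod_lt (n + s - 1) hs0
      have hub : s * q ≤ n + s - 1 := by omega
      have hlb : n ≤ s * q := by omega
      have hq3 : 3 ≤ q := by
        by_contra h
        push_neg at h
        have : s * q ≤ s * 2 := Nat.mul_le_mul_left s (by omega)
        omega
      have hsum : (q - 1) + s ≤ s * (q - 1) := by
        have h1 := Nat.add_le_mul (show 2 ≤ q - 1 by omega) hs
        calc (q - 1) + s ≤ (q - 1) * s := h1
          _ = s * (q - 1) := Nat.mul_comm _ _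
      have hmul : s * (q - 1) = s * q - s := by
        rw [Nat.mul_sub, Nat.mul_one]
      have hqn : q + s ≤ n := by omega
      have hrec := ih (q - 1) (ceilDivAux_lt' s n hc) (by omega)
      rw [S2, D2]
      simp only [if_neg (by omega : ¬ n ≤ 2 * s)]
      rw [← hq]
      omega
end

section
/- For integers n1, n2 > 1 and n = n1·n2, one has L_n − I_n = (L_{n1} ⊗ L_{n2} + L⁻_{n1} ⊗ U⁻_{n2}) − I_{n1} ⊗ I_{n2}; in particular the strictly lower triangular all-ones matrix L⁻_n equals L_{n1} ⊗ L_{n2} + L⁻_{n1} ⊗ U⁻_{n2} − I_{n1} ⊗ I_{n2}. -/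
open Kronecker

lemma nat_le_iff (n2 i1 j1 i2 j2 : ℕ) (hi : i2 < n2) (hj : j2 < n2) :
    j2 + n2 * j1 ≤ i2 + n2 * i1 ↔ (j1 < i1 ∨ (j1 = i1 ∧ j2 ≤ i2)) := by
  rcases lt_trichotomy j1 i1 with h | h | h
  · have := Nat.mul_le_mul_left n2 h
    rw [Nat.mul_succ] at this
    simp only [h, true_or, iff_true]
    omega
  · subst h; simp
  · have := Nat.mul_le_mul_left n2 h
    rw [Nat.mul_succ] at this
    constructor
    · intro hle; omega
    · intro hor; omega

theorem Lstrict_kronecker_decomposition (R : Type*) [CommRing R]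
    (n n1 n2 : ℕ) (h1 : 1 < n1) (h2 : 1 < n2) (hn : n = n1 * n2) :
    Lone R n - 1 =
      Matrix.reindex (finProdFinEquiv.trans (finCongr hn.symm))
        (finProdFinEquiv.trans (finCongr hn.symm))
        (Lone R n1 ⊗ₖ Lone R n2 + Lstrict R n1 ⊗ₖ Ustrict R n2 -
          (1 : Matrix (Fin n1) (Fin n1) R) ⊗ₖ (1 : Matrix (Fin n2) (Fin n2) R)) ∧
    Lstrict R n =
      Matrix.reindex (finProdFinEquiv.trans (finCongr hn.symm))
        (finProdFinEquiv.trans (finCongr hn.symm))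
        (Lone R n1 ⊗ₖ Lone R n2 + Lstrict R n1 ⊗ₖ Ustrict R n2 -
          (1 : Matrix (Fin n1) (Fin n1) R) ⊗ₖ (1 : Matrix (Fin n2) (Fin n2) R)) := by
  have key : Lone R n - 1 =
      Matrix.reindex (finProdFinEquiv.trans (finCongr hn.symm))
        (finProdFinEquiv.trans (finCongr hn.symm))
        (Lone R n1 ⊗ₖ Lone R n2 + Lstrict R n1 ⊗ₖ Ustrict R n2 -
          (1 : Matrix (Fin n1) (Fin n1) R) ⊗ₖ (1 : Matrix (Fin n2) (Fin n2) R)) := by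
    subst hn
    ext i j
    obtain ⟨⟨i1, i2⟩, rfl⟩ := (finProdFinEquiv.trans (finCongr rfl)).surjective i
    obtain ⟨⟨j1, j2⟩, rfl⟩ := (finProdFinEquiv.trans (finCongr rfl)).surjective j
    simp only [Matrix.reindex_apply, Matrix.submatrix_apply, Equiv.symm_apply_apply]
    simp only [Matrix.sub_apply, Matrix.add_apply, Matrix.kroneckerMap_apply, Lone, Uone,
      Lstrict, Ustrict, Matrix.of_apply, Matrix.one_apply, Equiv.trans_apply,
      finCongr_apply, Fin.cast_refl, id_eq, EmbeddingLike.apply_eq_iff_eq, Prod.ext_iff]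
    have hle : (finProdFinEquiv (j1, j2) : Fin (n1 * n2)) ≤ finProdFinEquiv (i1, i2) ↔
        ((j1 : ℕ) < i1 ∨ ((j1 : ℕ) = i1 ∧ (j2 : ℕ) ≤ i2)) := by
      rw [Fin.le_def]
      simp only [finProdFinEquiv_apply_val]
      exact nat_le_iff n2 i1 j1 i2 j2 i2.isLt j2.isLt
    simp only [hle, Fin.le_def, Fin.ext_iff]
    clear hle
    split_ifs
    all_goals try ring
    all_goals exfalso
    all_goals omega
  exact ⟨key, by rw [Lstrict]; exact key⟩
end

section
/- For every prefix circuit on n inputs (a circuit of binary associative-operation gates computing all n prefix outputs), the depth D and size S satisfy D + S ≥ 2n − 2 (Snir's bound). -/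
/-- A prefix circuit on `n` inputs: a DAG of `size` gates, each with fan-in 2.
Each gate input is either one of the `n` circuit inputs (`Sum.inl`) or the output of an
earlier gate (`Sum.inr`); acyclicity is enforced by requiring gate references to point to
strictly smaller gate indices. -/
structure PrefixCircuit (n : ℕ) where
  size : ℕ
  left : Fin size → Fin n ⊕ Fin size
  right : Fin size → Fin n ⊕ Fin size
  left_lt : ∀ (g h : Fin size), left g = Sum.inr h → (h : ℕ) < (g : ℕ)
  right_lt : ∀ (g h : Fin size), right g = Sum.inr h → (h : ℕ) < (g : ℕ)

/-- The value of gate `k` as an element of the free semigroup on the generators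
`x_0, …, x_{n-1}`, represented as a (nonempty) word in `List (Fin n)`:
each gate concatenates (i.e. multiplies, in the free semigroup) its two operands. -/
def gateVal {n : ℕ} (c : PrefixCircuit n) : ℕ → List (Fin n)
  | k =>
    if hk : k < c.size then
      (match hL : c.left ⟨k, hk⟩ with
        | Sum.inl i => [i]
        | Sum.inr h => gateVal c h.val) ++
      (match hR : c.right ⟨k, hk⟩ with
        | Sum.inl i => [i]
        | Sum.inr h => gateVal c h.val)
    else []
  termination_by k => k
  decreasing_by
    · exact c.left_lt ⟨k, hk⟩ h hL
    · exact c.right_lt ⟨k, hk⟩ h hR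

/-- Number of gates on the longest path from an input to (and including) gate `k`. -/
def gateDepth {n : ℕ} (c : PrefixCircuit n) : ℕ → ℕ
  | k =>
    if hk : k < c.size then
      1 + max
        (match hL : c.left ⟨k, hk⟩ with
          | Sum.inl _ => 0
          | Sum.inr h => gateDepth c h.val)
        (match hR : c.right ⟨k, hk⟩ with
          | Sum.inl _ => 0
          | Sum.inr h => gateDepth c h.val)
    else 0
  termination_by k => k
  decreasing_by
    · exact c.left_lt ⟨k, hk⟩ h hL
    · exact c.right_lt ⟨k, hk⟩ h hR

/-- The value available at a node (an input or a gate output). -/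
def nodeVal {n : ℕ} (c : PrefixCircuit n) : Fin n ⊕ Fin c.size → List (Fin n)
  | Sum.inl i => [i]
  | Sum.inr g => gateVal c g.val

/-- The depth of the circuit: the maximum number of gates on any input-to-output path. -/
def circuitDepth {n : ℕ} (c : PrefixCircuit n) : ℕ :=
  Finset.univ.sup fun g : Fin c.size => gateDepth c g.val

/-- `c` computes all prefixes: for each `i`, some node carries the word
`x_0 x_1 ⋯ x_i` (the product `x_0 ∘ x_1 ∘ ⋯ ∘ x_i` in the free semigroup). -/
def ComputesPrefixes {n : ℕ} (c : PrefixCircuit n) : Prop :=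
  ∀ i : Fin n, ∃ v : Fin n ⊕ Fin c.size, nodeVal c v = (List.finRange n).take (i + 1)

/-!
Let `O` be a node computing the full product `x₀ x₁ ⋯ x_{n-1}`. Its letters are distinct, so the
two operands of every gate below `O` have disjoint cones: the cone of `O` is a binary tree with
`n` leaves, hence has at least `n - 1` gates. The `n - 1` prefixes of length `≥ 2` are computed by
distinct gates. Those outside the cone of `O` add to its `n - 1` gates in the size count. Those
inside all contain the leaf `x₀`, and in a tree two subtrees sharing a leaf are nested; so they lie
on one path, have distinct depths in `[1, D]`, and number at most `D`.
-/

namespace PrefixCircuit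

open Finset Relation

variable {n : ℕ} (c : PrefixCircuit n)

inductive IsOperand : Fin n ⊕ Fin c.size → Fin n ⊕ Fin c.size → Prop
  | left (g : Fin c.size) : IsOperand (c.left g) (.inr g)
  | right (g : Fin c.size) : IsOperand (c.right g) (.inr g)

def Reaches : Fin n ⊕ Fin c.size → Fin n ⊕ Fin c.size → Prop :=
  ReflTransGen c.IsOperand

open Classical in
noncomputable def cone (w : Fin n ⊕ Fin c.size) : Finset (Fin c.size) :=
  univ.filter fun g => c.Reaches (.inr g) w

def nodeDepth : Fin n ⊕ Fin c.size → ℕ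
  | .inl _ => 0
  | .inr g => gateDepth c g

def prefixGates : Finset (Fin c.size) :=
  univ.filter fun g => nodeVal c (.inr g) <+: List.finRange n

@[elab_as_elim]
theorem node_induction {motive : Fin n ⊕ Fin c.size → Prop} (input : ∀ i, motive (.inl i))
    (gate : ∀ g, motive (c.left g) → motive (c.right g) → motive (.inr g)) :
    ∀ v, motive v := by
  suffices ∀ g, motive (.inr g) by rintro (i | g); exacts [input i, this g]
  intro g
  induction g using WellFoundedLT.induction with
  | _ g ih =>
    have operand : ∀ v, (∀ h, v = .inr h → h < g) → motive v := by
      rintro (i | h) hv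
      exacts [input i, ih h (hv h rfl)]
    exact gate g (operand _ (c.left_lt g)) (operand _ (c.right_lt g))

theorem nodeVal_inr (g : Fin c.size) :
    nodeVal c (.inr g) = nodeVal c (c.left g) ++ nodeVal c (c.right g) := by
  rw [nodeVal, gateVal, dif_pos g.isLt]
  congr 1 <;> split <;> simp_all [nodeVal]

theorem nodeDepth_inr (g : Fin c.size) :
    c.nodeDepth (.inr g) = 1 + max (c.nodeDepth (c.left g)) (c.nodeDepth (c.right g)) := by
  rw [nodeDepth, gateDepth, dif_pos g.isLt]
  congr 2 <;> split <;> simp_all [nodeDepth]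

theorem nodeVal_ne_nil : ∀ v, nodeVal c v ≠ [] := by
  refine c.node_induction (fun i => by simp [nodeVal]) fun g hl _ => ?_
  simp [nodeVal_inr, hl]

theorem nodeDepth_le_circuitDepth (g : Fin c.size) :
    c.nodeDepth (.inr g) ≤ circuitDepth c :=
  le_sup (f := fun g : Fin c.size => gateDepth c g) (mem_univ g)

theorem one_le_nodeDepth_inr (g : Fin c.size) : 1 ≤ c.nodeDepth (.inr g) := by
  rw [nodeDepth_inr]; omega

variable {c}

theorem IsOperand.nodeDepth_lt {v w} (h : c.IsOperand v w) : c.nodeDepth v < c.nodeDepth w := by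
  cases h <;> rw [nodeDepth_inr] <;> omega

theorem IsOperand.subset {v w} (h : c.IsOperand v w) : nodeVal c v ⊆ nodeVal c w := by
  cases h <;> simp [nodeVal_inr]

theorem Reaches.subset {v w} (h : c.Reaches v w) : nodeVal c v ⊆ nodeVal c w := by
  induction h with
  | refl => exact List.Subset.refl _
  | tail _ hop ih => exact fun _ ha => hop.subset (ih ha)

theorem nodeDepth_lt_of_transGen {v w} (h : TransGen c.IsOperand v w) :
    c.nodeDepth v < c.nodeDepth w := by
  induction h with
  | single hop => exact hop.nodeDepth_lt
  | tail _ hop ih => exact ih.trans hop.nodeDepth_lt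

theorem Reaches.nodeDepth_lt {v w} (h : c.Reaches v w) (hne : v ≠ w) :
    c.nodeDepth v < c.nodeDepth w := by
  obtain rfl | h := reflTransGen_iff_eq_or_transGen.mp h
  exacts [absurd rfl hne, nodeDepth_lt_of_transGen h]

theorem Reaches.nodeDepth_le {v w} (h : c.Reaches v w) : c.nodeDepth v ≤ c.nodeDepth w := by
  obtain rfl | hne := eq_or_ne v w
  exacts [le_rfl, (h.nodeDepth_lt hne).le]

theorem IsOperand.not_reaches {v w} (h : c.IsOperand v w) : ¬ c.Reaches w v :=
  fun hr => hr.nodeDepth_le.not_gt h.nodeDepth_lt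

theorem reaches_inl_iff {v i} : c.Reaches v (.inl i) ↔ v = .inl i := by
  rw [Reaches, ReflTransGen.cases_tail_iff]
  constructor
  · rintro (h | ⟨_, _, ⟨⟩⟩)
    exact h.symm
  · exact fun h => .inl h.symm

theorem reaches_inr_iff {v g} :
    c.Reaches v (.inr g) ↔ v = .inr g ∨ c.Reaches v (c.left g) ∨ c.Reaches v (c.right g) := by
  rw [Reaches, ReflTransGen.cases_tail_iff]
  constructor
  · rintro (h | ⟨_, hr, ⟨⟩⟩)
    exacts [.inl h.symm, .inr (.inl hr), .inr (.inr hr)]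
  · rintro (h | h | h)
    exacts [.inl h.symm, .inr ⟨_, h, .left g⟩, .inr ⟨_, h, .right g⟩]

theorem cone_inl (i : Fin n) : c.cone (.inl i) = ∅ := by
  ext g; simp [cone, reaches_inl_iff]

theorem cone_inr (g : Fin c.size) :
    c.cone (.inr g) = insert g (c.cone (c.left g) ∪ c.cone (c.right g)) := by
  ext h; simp [cone, reaches_inr_iff]

theorem disjoint_cone_left_right {g : Fin c.size} (hnd : (nodeVal c (.inr g)).Nodup) :
    Disjoint (c.cone (c.left g)) (c.cone (c.right g)) := by
  rw [nodeVal_inr, List.nodup_append] at hnd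
  rw [Finset.disjoint_left]
  intro h hl hr
  simp only [cone, mem_filter, mem_univ, true_and] at hl hr
  obtain ⟨a, ha⟩ := List.exists_mem_of_ne_nil _ (c.nodeVal_ne_nil (.inr h))
  exact hnd.2.2 a (hl.subset ha) a (hr.subset ha) rfl

theorem notMem_cone_left_union_right (g : Fin c.size) :
    g ∉ c.cone (c.left g) ∪ c.cone (c.right g) := by
  simp only [cone, mem_union, mem_filter, mem_univ, true_and, not_or]
  exact ⟨(IsOperand.left g).not_reaches, (IsOperand.right g).not_reaches⟩

theorem length_le_card_cone_add_one :
    ∀ w, (nodeVal c w).Nodup → (nodeVal c w).length ≤ (c.cone w).card + 1 := by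
  refine c.node_induction (fun i _ => by simp [nodeVal, cone_inl]) fun g hl hr hnd => ?_
  have hdisj := disjoint_cone_left_right hnd
  rw [nodeVal_inr, List.nodup_append] at hnd
  rw [nodeVal_inr, List.length_append, cone_inr, card_insert_of_notMem
    (notMem_cone_left_union_right g), card_union_of_disjoint hdisj]
  have := hl hnd.1
  have := hr hnd.2.1
  omega

theorem reaches_total_of_mem {a : Fin n} {u v : Fin n ⊕ Fin c.size} (hau : a ∈ nodeVal c u)
    (hav : a ∈ nodeVal c v) :
    ∀ w, (nodeVal c w).Nodup → c.Reaches u w → c.Reaches v w → c.Reaches u v ∨ c.Reaches v u := by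
  refine c.node_induction (fun i _ hu hv => ?_) fun g hl hr hnd hu hv => ?_
  · rw [reaches_inl_iff] at hu hv
    subst hu hv
    exact .inl .refl
  rw [nodeVal_inr, List.nodup_append] at hnd
  obtain ⟨hndl, hndr, hdisj⟩ := hnd
  obtain rfl | hug := eq_or_ne u (.inr g)
  · exact .inr hv
  obtain rfl | hvg := eq_or_ne v (.inr g)
  · exact .inl hu
  obtain hul | hur := (reaches_inr_iff.mp hu).resolve_left hug <;>
    obtain hvl | hvr := (reaches_inr_iff.mp hv).resolve_left hvg
  · exact hl hndl hul hvl
  · exact absurd rfl (hdisj a (hul.subset hau) a (hvr.subset hav))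
  · exact absurd rfl (hdisj a (hvl.subset hav) a (hur.subset hau))
  · exact hr hndr hur hvr

theorem card_le_circuitDepth_of_isChain {s : Finset (Fin c.size)}
    (hs : IsChain (fun g h => c.Reaches (.inr g) (.inr h)) (s : Set (Fin c.size))) :
    s.card ≤ circuitDepth c := by
  have hinj : Set.InjOn (fun g => c.nodeDepth (.inr g)) s := by
    intro g hg h hh heq
    by_contra hne
    rcases hs hg hh hne with hr | hr
    · exact (hr.nodeDepth_lt (by simpa using hne)).ne heq
    · exact (hr.nodeDepth_lt (by simpa using Ne.symm hne)).ne heq.symm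
  calc s.card ≤ (Icc 1 (circuitDepth c)).card := card_le_card_of_injOn _
        (fun g _ => mem_Icc.mpr ⟨c.one_le_nodeDepth_inr g, c.nodeDepth_le_circuitDepth g⟩) hinj
    _ = circuitDepth c := by simp

theorem sub_one_le_card_prefixGates (hc : ComputesPrefixes c) : n - 1 ≤ c.prefixGates.card := by
  calc n - 1 = (Icc 2 n).card := by simp
    _ ≤ _ := card_le_card_of_surjOn (fun g => (nodeVal c (.inr g)).length) ?_
  intro k hk
  obtain ⟨hk2, hkn⟩ := mem_Icc.mp hk
  obtain ⟨v, hv⟩ := hc ⟨k - 1, by omega⟩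
  have hlen : (nodeVal c v).length = k := by simp [hv]; omega
  obtain i | g := v
  · simp [nodeVal] at hlen; omega
  · exact ⟨g, by simp [prefixGates, hv, List.take_prefix], hlen⟩

theorem isChain_prefixGates_inter_cone {w} (hw : (nodeVal c w).Nodup) :
    IsChain (fun g h => c.Reaches (.inr g) (.inr h)) ↑(c.prefixGates ∩ c.cone w) := by
  intro g hg h hh _
  simp only [coe_inter, Set.mem_inter_iff, mem_coe, prefixGates, cone, mem_filter, mem_univ,
    true_and] at hg hh
  have hgnil := c.nodeVal_ne_nil (.inr g)
  have hhnil := c.nodeVal_ne_nil (.inr h)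
  have hhead : (nodeVal c (.inr h)).head hhnil = (nodeVal c (.inr g)).head hgnil := by
    rw [hg.1.head, hh.1.head]
  exact reaches_total_of_mem (List.head_mem hgnil) (hhead ▸ List.head_mem hhnil) w hw hg.2 hh.2

end PrefixCircuit

/-- Snir's bound: every prefix circuit on `n` inputs satisfies `D + S ≥ 2n - 2`. -/
theorem snir_bound {n : ℕ} (c : PrefixCircuit n) (hc : ComputesPrefixes c) :
    2 * n - 2 ≤ circuitDepth c + c.size := by
  obtain _ | m := n
  · simp
  obtain ⟨O, hO⟩ : ∃ O, nodeVal c O = List.finRange (m + 1) := by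
    simpa [List.take_of_length_le] using hc (Fin.last m)
  have hnd : (nodeVal c O).Nodup := hO ▸ List.nodup_finRange _
  have hcone : m ≤ (c.cone O).card := by
    simpa [hO] using c.length_le_card_cone_add_one O hnd
  have hinside : (c.prefixGates ∩ c.cone O).card ≤ circuitDepth c :=
    c.card_le_circuitDepth_of_isChain (c.isChain_prefixGates_inter_cone hnd)
  have houtside : (c.prefixGates \ c.cone O).card + (c.cone O).card ≤ c.size := by
    simpa [Finset.card_sdiff_add_card] using Finset.card_le_univ (c.prefixGates ∪ c.cone O)
  have hsplit := Finset.card_inter_add_card_sdiff c.prefixGates (c.cone O)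
  have hprefixes := c.sub_one_le_card_prefixGates hc
  omega
end
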